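/- arXiv:2401.08248 — 2 statements merged into one kernel-verified Lean document; each statement's English description precedes it below -/
import Mathlib

section
/- For every integer n ≥ 1, the t-module matrix D₂ⁿ (as above) is never of the form A₀ + A₁τ + ... + A_rτ^r with A_r ∈ GL₂(K); that is, the t-module defined by D₂ is not almost strictly pure. -/
/-!
The upper row of `D₂ⁿ` is `((1 + τ)ⁿ, 0)`, of τ-degree `n`, while the lower left entry `Lₙ`
satisfies `Lₙ₊₁ = Lₙ (1 + τ) + (1 + τ)ⁿ θ τ²`; hence it has τ-degree `≤ n + 1` with
`(n + 1)`-st coefficient `θ + θ^q + ⋯ + θ^(q^(n-1))`, which is nonzero because `θ` is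
transcendental. So any expansion `D₂ⁿ = ∑_{k ≤ r} A_k τ^k` has `r ≥ n + 1`, and then the upper
row of `A_r` vanishes, so `A_r` is singular.
-/

open Finset

section LowerTriangular

variable {R : Type*} [Semiring R] (a b : R)

theorem Matrix.fin_two_lower_pow (n : ℕ) :
    !![a, 0; b, a] ^ n = !![a ^ n, 0; (!![a, 0; b, a] ^ n) 1 0, a ^ n] := by
  induction n with
  | zero => simp [Matrix.one_fin_two]
  | succ n ih =>
    rw [pow_succ, ih, Matrix.mul_fin_two]
    simp [pow_succ]

theorem Matrix.fin_two_lower_pow_succ_one_zero (n : ℕ) :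
    (!![a, 0; b, a] ^ (n + 1)) 1 0 = (!![a, 0; b, a] ^ n) 1 0 * a + a ^ n * b := by
  rw [pow_succ, Matrix.fin_two_lower_pow a b n]
  simp [Matrix.mul_apply, Fin.sum_univ_two]

end LowerTriangular

section TwistedPolynomial

variable {K R : Type*} [Semiring K] [Semiring R] (ι : K →+* R) (τ : R)

/-- `x` has τ-degree at most `N` and `N`-th τ-coefficient `c`. -/
def HasTopCoeff (x : R) (N : ℕ) (c : K) : Prop :=
  ∃ a : ℕ → K, a N = c ∧ x = ∑ k ∈ range (N + 1), ι (a k) * τ ^ k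

theorem pow_mul_map_eq_of_twist {q : ℕ} (twist : ∀ a : K, τ * ι a = ι (a ^ q) * τ) (k : ℕ)
    (a : K) : τ ^ k * ι a = ι (a ^ q ^ k) * τ ^ k := by
  induction k generalizing a with
  | zero => simp
  | succ k ih =>
    rw [pow_succ, mul_assoc, twist, ← mul_assoc, ih, mul_assoc, ← pow_succ, ← pow_mul,
      ← pow_succ']

variable {ι τ}

namespace HasTopCoeff

theorem zero (N : ℕ) : HasTopCoeff ι τ (0 : R) N 0 :=
  ⟨0, rfl, by simp⟩

theorem one : HasTopCoeff ι τ (1 : R) 0 1 :=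
  ⟨1, rfl, by simp⟩

theorem add {x y : R} {N : ℕ} {c d : K} (hx : HasTopCoeff ι τ x N c)
    (hy : HasTopCoeff ι τ y N d) : HasTopCoeff ι τ (x + y) N (c + d) := by
  obtain ⟨a, rfl, rfl⟩ := hx
  obtain ⟨b, rfl, rfl⟩ := hy
  exact ⟨a + b, rfl, by simp only [Pi.add_apply, map_add, add_mul, sum_add_distrib]⟩

theorem succ {x : R} {N : ℕ} {c : K} (hx : HasTopCoeff ι τ x N c) :
    HasTopCoeff ι τ x (N + 1) 0 := by
  obtain ⟨a, -, rfl⟩ := hx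
  refine ⟨Function.update a (N + 1) 0, Function.update_self .., ?_⟩
  rw [sum_range_succ _ (N + 1), Function.update_self, map_zero, zero_mul, add_zero]
  exact sum_congr rfl fun k hk => by
    rw [Function.update_of_ne (by simp at hk; omega)]

theorem of_lt {x : R} {N M : ℕ} {c : K} (hx : HasTopCoeff ι τ x N c) (hNM : N < M) :
    HasTopCoeff ι τ x M 0 := by
  induction M, hNM using Nat.le_induction with
  | base => exact hx.succ
  | succ M _ ih => exact ih.succ

theorem mul_tau {x : R} {N : ℕ} {c : K} (hx : HasTopCoeff ι τ x N c) :
    HasTopCoeff ι τ (x * τ) (N + 1) c := by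
  obtain ⟨a, rfl, rfl⟩ := hx
  refine ⟨fun | 0 => 0 | k + 1 => a k, rfl, ?_⟩
  rw [sum_mul, sum_range_succ' _ (N + 1)]
  simp only [pow_succ, mul_assoc, map_zero, zero_mul, add_zero]

theorem mul_one_add_tau {x : R} {N : ℕ} {c : K} (hx : HasTopCoeff ι τ x N c) :
    HasTopCoeff ι τ (x * (1 + τ)) (N + 1) c := by
  simpa [mul_add] using hx.succ.add hx.mul_tau

theorem mul_map {q : ℕ} (twist : ∀ a : K, τ * ι a = ι (a ^ q) * τ) {x : R} {N : ℕ} {c : K}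
    (hx : HasTopCoeff ι τ x N c) (b : K) : HasTopCoeff ι τ (x * ι b) N (c * b ^ q ^ N) := by
  obtain ⟨a, rfl, rfl⟩ := hx
  refine ⟨fun k => a k * b ^ q ^ k, rfl, ?_⟩
  rw [sum_mul]
  refine sum_congr rfl fun k _ => ?_
  rw [mul_assoc, pow_mul_map_eq_of_twist ι τ twist, ← mul_assoc, map_mul]

variable {coeff : R → ℕ → K}
  (hcoeff : ∀ (N : ℕ) (a : ℕ → K),
    coeff (∑ k ∈ range (N + 1), ι (a k) * τ ^ k) = fun k => if k ≤ N then a k else 0)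
include hcoeff

theorem coeff_eq {x : R} {N : ℕ} {c : K} (hx : HasTopCoeff ι τ x N c) : coeff x N = c := by
  obtain ⟨a, rfl, rfl⟩ := hx
  simp [hcoeff]

theorem coeff_eq_zero {x : R} {N k : ℕ} {c : K} (hx : HasTopCoeff ι τ x N c) (hk : N < k) :
    coeff x k = 0 := by
  obtain ⟨a, rfl, rfl⟩ := hx
  simp [hcoeff, hk.not_ge]

theorem unique {x : R} {N : ℕ} {c d : K} (hc : HasTopCoeff ι τ x N c)
    (hd : HasTopCoeff ι τ x N d) : c = d :=
  (hc.coeff_eq hcoeff).symm.trans (hd.coeff_eq hcoeff)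

theorem le_of_ne_zero {x : R} {N M : ℕ} {c d : K} (hc : HasTopCoeff ι τ x N c) (hc0 : c ≠ 0)
    (hd : HasTopCoeff ι τ x M d) : N ≤ M := by
  by_contra! hMN
  exact hc0 ((hc.coeff_eq hcoeff).symm.trans (hd.coeff_eq_zero hcoeff hMN))

end HasTopCoeff

theorem hasTopCoeff_one_add_tau_pow (n : ℕ) : HasTopCoeff ι τ ((1 + τ) ^ n) n 1 := by
  induction n with
  | zero => simpa using HasTopCoeff.one
  | succ n ih => simpa [pow_succ] using ih.mul_one_add_tau

theorem Matrix.hasTopCoeff_sum_map_mul_diagonal_pow_apply {n : Type*} [Fintype n]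
    [DecidableEq n] (A : ℕ → Matrix n n K) (r : ℕ) (i j : n) :
    HasTopCoeff ι τ
      ((∑ k ∈ range (r + 1), (A k).map ι * Matrix.diagonal (fun _ => τ) ^ k : Matrix n n R) i j)
      r (A r i j) := by
  refine ⟨fun k => A k i j, rfl, ?_⟩
  simp [Matrix.sum_apply, Matrix.diagonal_pow, Matrix.mul_diagonal]

theorem hasTopCoeff_fin_two_lower_pow_one_zero {q : ℕ}
    (twist : ∀ a : K, τ * ι a = ι (a ^ q) * τ) (θ : K) (m : ℕ) :
    HasTopCoeff ι τ ((!![1 + τ, 0; ι θ * τ ^ 2, 1 + τ] ^ m) 1 0) (m + 1)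
      (∑ i ∈ range m, θ ^ q ^ i) := by
  induction m with
  | zero => simpa using HasTopCoeff.zero (ι := ι) (τ := τ) 1
  | succ m ih =>
    rw [Matrix.fin_two_lower_pow_succ_one_zero, sum_range_succ,
      show (1 + τ) ^ m * (ι θ * τ ^ 2) = (1 + τ) ^ m * ι θ * τ * τ by
        simp only [pow_two, mul_assoc]]
    simpa using ih.mul_one_add_tau.add
      ((hasTopCoeff_one_add_tau_pow m).mul_map twist θ).mul_tau.mul_tau

end TwistedPolynomial

open Polynomial in
theorem Transcendental.sum_pow_pow_ne_zero {F L : Type*} [CommRing F] [Nontrivial F]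
    [CommRing L] [Algebra F L] {x : L} (hx : Transcendental F x) {q n : ℕ} (hq : 1 < q)
    (hn : n ≠ 0) : ∑ i ∈ range n, x ^ q ^ i ≠ 0 := by
  intro h
  refine hx ⟨∑ i ∈ range n, X ^ q ^ i, fun h0 => ?_, by simpa using h⟩
  -- the coefficient of `X` is `1`, coming from `i = 0` alone
  have hX : (∑ i ∈ range n, (X : F[X]) ^ q ^ i).coeff 1 = 1 := by
    rw [finsetSum_coeff, sum_eq_single_of_mem 0 (by simpa [Nat.pos_iff_ne_zero] using hn)]
    · simp
    · intro i _ hi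
      rw [coeff_X_pow, if_neg (Nat.one_lt_pow hi hq).ne]
  simp [h0] at hX

theorem D2_not_almost_strictly_pure_general (q : ℕ) (Fq K R : Type*)
    [Field Fq] [Fintype Fq] (hcard : Fintype.card Fq = q)
    [Field K] [Algebra Fq K] [Ring R]
    (θ : K) (hθ : Transcendental Fq θ)
    (ι : K →+* R) (τ : R)
    (twist : ∀ a : K, τ * ι a = ι (a ^ q) * τ)
    (coeff : R → ℕ → K)
    (hcoeff : ∀ (N : ℕ) (a : ℕ → K),
      coeff (∑ k ∈ Finset.range (N + 1), ι (a k) * τ ^ k)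
        = fun k => if k ≤ N then a k else 0)
    (D2 : Matrix (Fin 2) (Fin 2) R)
    (hD2 : D2 = !![1 + τ, 0; ι θ * τ ^ 2, 1 + τ]) :
    ∀ n : ℕ, 1 ≤ n →
      ¬ ∃ (r : ℕ) (A : ℕ → Matrix (Fin 2) (Fin 2) K), IsUnit (A r) ∧
        D2 ^ n = ∑ k ∈ Finset.range (r + 1),
          (A k).map ι * (Matrix.diagonal fun _ => τ) ^ k := by
  rintro n hn ⟨r, A, hAr, hA⟩
  have hentry := Matrix.hasTopCoeff_sum_map_mul_diagonal_pow_apply (ι := ι) (τ := τ) A r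
  rw [← hA] at hentry
  have hlower := hasTopCoeff_fin_two_lower_pow_one_zero twist θ n
  rw [← hD2] at hlower
  have hr : n < r := hlower.le_of_ne_zero hcoeff
    (hθ.sum_pow_pow_ne_zero (hcard ▸ Fintype.one_lt_card) (by omega)) (hentry 1 0)
  have hpow : D2 ^ n = !![(1 + τ) ^ n, 0; (D2 ^ n) 1 0, (1 + τ) ^ n] := by
    rw [hD2]; exact Matrix.fin_two_lower_pow ..
  have h00 : A r 0 0 = 0 := (hentry 0 0).unique hcoeff (by
    rw [hpow]; exact (hasTopCoeff_one_add_tau_pow n).of_lt hr)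
  have h01 : A r 0 1 = 0 := (hentry 0 1).unique hcoeff (by
    rw [hpow]; exact HasTopCoeff.zero r)
  have hdet : (A r).det = 0 := by simp [Matrix.det_fin_two, h00, h01]
  exact not_isUnit_zero (hdet ▸ (Matrix.isUnit_iff_isUnit_det _).mp hAr)

/-- For every integer `n ≥ 1`, the matrix `D₂ ^ n` (with
`D₂ = I₂ + I₂·τ + [[0,0],[θ,0]]·τ² ∈ M₂(K{τ})`, `θ` transcendental over `F_q`)
is never of the form `A₀ + A₁τ + ... + A_r τ^r` with `A_r ∈ GL₂(K)`; that is, the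
`t`-module defined by `D₂` is not almost strictly pure. -/
theorem D2_not_almost_strictly_pure (q : ℕ) (Fq K R : Type*)
    [Field Fq] [Fintype Fq] (hcard : Fintype.card Fq = q)
    [Field K] [Algebra Fq K] [Ring R]
    (θ : K) (hθ : Transcendental Fq θ)
    (ι : K →+* R) (τ : R)
    (twist : ∀ a : K, τ * ι a = ι (a ^ q) * τ)
    (coeff : R → ℕ → K)
    (hrepr : ∀ x : R, ∃ N : ℕ,
      x = ∑ k ∈ Finset.range (N + 1), ι (coeff x k) * τ ^ k ∧ ∀ k > N, coeff x k = 0)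
    (hcoeff : ∀ (N : ℕ) (a : ℕ → K),
      coeff (∑ k ∈ Finset.range (N + 1), ι (a k) * τ ^ k)
        = fun k => if k ≤ N then a k else 0)
    (D2 : Matrix (Fin 2) (Fin 2) R)
    (hD2 : D2 = !![1 + τ, 0; ι θ * τ ^ 2, 1 + τ]) :
    ∀ n : ℕ, 1 ≤ n →
      ¬ ∃ (r : ℕ) (A : ℕ → Matrix (Fin 2) (Fin 2) K), IsUnit (A r) ∧
        D2 ^ n = ∑ k ∈ Finset.range (r + 1),
          (A k).map ι * (Matrix.diagonal fun _ => τ) ^ k :=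
  D2_not_almost_strictly_pure_general q Fq K R hcard θ hθ ι τ twist coeff hcoeff D2 hD2
end

section
/- For every integer d ≥ 2, the block-diagonal matrix D_d = diag(D₂, θ+τ, ..., θ+τ) ∈ M_d(K{τ}) (with d−2 copies of θ+τ) has the property that for every n ≥ 1, the leading τ-coefficient of D_dⁿ equals the block matrix diag(A_{n+1,n}, 0_{d−2}) where A_{n+1,n} = [[0,0],[x_{n+1,n},0]] with x_{n+1,n} ≠ 0; in particular this leading coefficient is a nonzero nilpotent matrix and D_d defines a t-module that is not almost strictly pure. -/
/-!
Since `D_d` is block diagonal, `D_dⁿ = diag([[uⁿ, 0], [Sₙ, uⁿ]], wⁿ, …, wⁿ)` with `u = 1 + τ`,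
`w = θ + τ` and `Sₙ₊₁ = Sₙ u + uⁿ θ τ²`. Here `uⁿ` and `wⁿ` have τ-degree `n`, whereas `Sₙ` has
τ-degree `n + 1` with leading coefficient `∑_{m<n} θ^(qᵐ)`, which is nonzero because `θ` is
transcendental and the exponents `qᵐ` are distinct. Hence the τ^(n+1)-coefficient matrix of `D_dⁿ`
is a nonzero multiple of the matrix unit `E₁₀`, so it is nilpotent; the top coefficient of any
τ-expansion of `D_dˢ` is either this matrix or zero, and never a unit.
-/

open Finset

def cornerPow {R : Type*} [Semiring R] (a c : R) : ℕ → R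
  | 0 => 0
  | n + 1 => cornerPow a c n * a + a ^ n * c

/-- `diag([[a, 0], [c, a]], e, …, e)`, with `k` copies of `e`. -/
def lowerBlockDiag {R : Type*} [Zero R] (k : ℕ) (a c e : R) :
    Matrix (Fin (k + 2)) (Fin (k + 2)) R :=
  Matrix.of fun i j =>
    if (i : ℕ) = 0 ∧ (j : ℕ) = 0 then a
    else if (i : ℕ) = 1 ∧ (j : ℕ) = 1 then a
    else if (i : ℕ) = 1 ∧ (j : ℕ) = 0 then c
    else if i = j then e
    else 0

theorem lowerBlockDiag_mul {R : Type*} [Semiring R] (k : ℕ) (a c e a' c' e' : R) :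
    lowerBlockDiag k a c e * lowerBlockDiag k a' c' e'
      = lowerBlockDiag k (a * a') (c * a' + a * c') (e * e') := by
  ext ⟨_ | _ | i, hi⟩ ⟨_ | _ | j, hj⟩ <;>
    simp [lowerBlockDiag, Matrix.mul_apply, Fin.sum_univ_succ, Fin.ext_iff, -Fin.val_eq_zero_iff]
  rw [Fin.sum_univ_eq_sum_range (fun x => if x = j then if i = x then e * e' else 0 else 0),
    sum_ite_eq', if_pos (mem_range.2 (by omega))]

theorem lowerBlockDiag_one_zero_one {R : Type*} [Semiring R] (k : ℕ) :
    lowerBlockDiag k (1 : R) 0 1 = 1 := by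
  ext ⟨_ | _ | i, hi⟩ ⟨_ | _ | j, hj⟩ <;>
    simp [lowerBlockDiag, Matrix.one_apply, Fin.ext_iff, -Fin.val_eq_zero_iff]

theorem lowerBlockDiag_pow {R : Type*} [Semiring R] (k : ℕ) (a c e : R) (n : ℕ) :
    lowerBlockDiag k a c e ^ n = lowerBlockDiag k (a ^ n) (cornerPow a c n) (e ^ n) := by
  induction n with
  | zero => simp [cornerPow, lowerBlockDiag_one_zero_one]
  | succ n ih => rw [pow_succ, ih, lowerBlockDiag_mul, ← pow_succ, ← pow_succ]; rfl

section TauPoly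

variable {K R : Type*} [Semiring K] [Semiring R] (ι : K →+* R) (τ : R)

def IsTauPolyLE (x : R) (n : ℕ) (c : K) : Prop :=
  ∃ a : ℕ → K, a n = c ∧ x = ∑ k ∈ range (n + 1), ι (a k) * τ ^ k

variable {ι τ}

theorem isTauPolyLE_zero (n : ℕ) : IsTauPolyLE ι τ 0 n 0 :=
  ⟨0, rfl, by simp⟩

theorem isTauPolyLE_one : IsTauPolyLE ι τ 1 0 1 :=
  ⟨1, rfl, by simp⟩

theorem IsTauPolyLE.add {x y : R} {n : ℕ} {c c' : K} (hx : IsTauPolyLE ι τ x n c)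
    (hy : IsTauPolyLE ι τ y n c') : IsTauPolyLE ι τ (x + y) n (c + c') := by
  obtain ⟨a, rfl, rfl⟩ := hx
  obtain ⟨b, rfl, rfl⟩ := hy
  exact ⟨a + b, rfl, by simp only [Pi.add_apply, map_add, add_mul, sum_add_distrib]⟩

theorem IsTauPolyLE.succ {x : R} {n : ℕ} {c : K} (hx : IsTauPolyLE ι τ x n c) :
    IsTauPolyLE ι τ x (n + 1) 0 := by
  obtain ⟨a, rfl, rfl⟩ := hx
  refine ⟨Function.update a (n + 1) 0, by simp, ?_⟩
  rw [sum_range_succ _ (n + 1), Function.update_self, map_zero, zero_mul, add_zero]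
  exact sum_congr rfl fun k hk => by
    rw [Function.update_of_ne (by simp at hk; omega)]

theorem IsTauPolyLE.mul_tau {x : R} {n : ℕ} {c : K} (hx : IsTauPolyLE ι τ x n c) :
    IsTauPolyLE ι τ (x * τ) (n + 1) c := by
  obtain ⟨a, rfl, rfl⟩ := hx
  refine ⟨fun k => if k = 0 then 0 else a (k - 1), by simp, ?_⟩
  simp [sum_range_succ' _ (n + 1), sum_mul, mul_assoc, pow_succ]

variable {q : ℕ} (twist : ∀ t : K, τ * ι t = ι (t ^ q) * τ)
include twist

theorem tau_pow_mul (m : ℕ) (t : K) : τ ^ m * ι t = ι (t ^ q ^ m) * τ ^ m := by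
  induction m generalizing t with
  | zero => simp
  | succ m ih =>
    rw [pow_succ, mul_assoc, twist, ← mul_assoc, ih, mul_assoc, ← pow_succ, ← pow_mul,
      ← pow_succ']

theorem IsTauPolyLE.mul_map {x : R} {n : ℕ} {c : K} (hx : IsTauPolyLE ι τ x n c) (t : K) :
    IsTauPolyLE ι τ (x * ι t) n (c * t ^ q ^ n) := by
  obtain ⟨a, rfl, rfl⟩ := hx
  refine ⟨fun k => a k * t ^ q ^ k, rfl, ?_⟩
  simp only [sum_mul, mul_assoc, tau_pow_mul twist, map_mul]

theorem isTauPolyLE_map_add_pow (t : K) (n : ℕ) : IsTauPolyLE ι τ ((ι t + τ) ^ n) n 1 := by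
  induction n with
  | zero => simpa using isTauPolyLE_one
  | succ n ih =>
    simpa [pow_succ _ n, mul_add] using ((ih.mul_map twist t).succ).add ih.mul_tau

theorem isTauPolyLE_cornerPow (s θ : K) (n : ℕ) :
    IsTauPolyLE ι τ (cornerPow (ι s + τ) (ι θ * τ ^ 2) n) (n + 1)
      (∑ m ∈ range n, θ ^ q ^ m) := by
  induction n with
  | zero => exact isTauPolyLE_zero 1
  | succ n ih =>
    have hpow := ((isTauPolyLE_map_add_pow twist s n).mul_map twist θ).mul_tau.mul_tau
    simpa [cornerPow, sum_range_succ, mul_add, pow_two, ← mul_assoc] using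
      ((ih.mul_map twist s).succ.add ih.mul_tau).add hpow

end TauPoly

theorem isTauPolyLE_lowerBlockDiag_apply {K R : Type*} [Semiring K] [Semiring R]
    {ι : K →+* R} {τ : R} {k N : ℕ} {a c e : R} {x : K} (ha : IsTauPolyLE ι τ a N 0)
    (hc : IsTauPolyLE ι τ c N x) (he : IsTauPolyLE ι τ e N 0) (i j : Fin (k + 2)) :
    IsTauPolyLE ι τ (lowerBlockDiag k a c e i j) N
      (if (i : ℕ) = 1 ∧ (j : ℕ) = 0 then x else 0) := by
  unfold lowerBlockDiag
  simp only [Matrix.of_apply]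
  split_ifs <;> first | assumption | exact isTauPolyLE_zero N | omega

section Coefficients

variable {K R : Type*} [Semiring K] [Semiring R] {ι : K →+* R} {τ : R} {coeff : R → ℕ → K}
  (hcoeff : ∀ (N : ℕ) (a : ℕ → K),
    coeff (∑ k ∈ range (N + 1), ι (a k) * τ ^ k) = fun k => if k ≤ N then a k else 0)
include hcoeff

theorem IsTauPolyLE.coeff_eq {x : R} {n : ℕ} {c : K} (hx : IsTauPolyLE ι τ x n c) :
    coeff x n = c := by
  obtain ⟨a, rfl, rfl⟩ := hx
  simp [hcoeff]

theorem IsTauPolyLE.coeff_eq_zero_of_lt {x : R} {n k : ℕ} {c : K} (hx : IsTauPolyLE ι τ x n c)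
    (hk : n < k) : coeff x k = 0 := by
  obtain ⟨a, rfl, rfl⟩ := hx
  simp [hcoeff, hk.not_ge]

theorem coeff_apply_eq_of_eq_sum {m : Type*} [Fintype m] [DecidableEq m] {M : Matrix m m R}
    {r : ℕ} {A : ℕ → Matrix m m K}
    (hM : M = ∑ k ∈ range (r + 1), (A k).map ι * (Matrix.diagonal fun _ => τ) ^ k)
    (i j : m) (k : ℕ) : coeff (M i j) k = if k ≤ r then A k i j else 0 := by
  have hentry : M i j = ∑ k ∈ range (r + 1), ι (A k i j) * τ ^ k := by
    simp [hM, Matrix.sum_apply, Matrix.diagonal_pow, Matrix.mul_diagonal]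
  rw [hentry, hcoeff]

end Coefficients

theorem sum_pow_pow_ne_zero_of_transcendental {F L : Type*} [CommRing F] [Nontrivial F]
    [Ring L] [Algebra F L] {θ : L} (hθ : Transcendental F θ) {q n : ℕ} (hq : 1 < q) (hn : n ≠ 0) :
    ∑ m ∈ range n, θ ^ q ^ m ≠ 0 := by
  intro h
  refine hθ ⟨∑ m ∈ range n, Polynomial.X ^ q ^ m, fun hp => ?_, by simpa using h⟩
  have hcoeff_one := congrArg (Polynomial.coeff · 1) hp
  simp only [Polynomial.finsetSum_coeff, Polynomial.coeff_X_pow, Polynomial.coeff_zero]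
    at hcoeff_one
  rw [sum_eq_single 0 (fun m _ hm => if_neg ?_)
    (fun h0 => absurd (mem_range.2 (by omega)) h0)] at hcoeff_one
  · simp at hcoeff_one
  · rw [eq_comm, Nat.pow_eq_one]; omega

theorem Matrix.isNilpotent_single_of_ne {m α : Type*} [Fintype m] [DecidableEq m] [Semiring α]
    {i j : m} (hij : i ≠ j) (c : α) : IsNilpotent (Matrix.single i j c) :=
  ⟨2, by simp [sq, hij.symm]⟩

theorem not_isUnit_of_eq_sum_of_isNilpotent_coeff {K R m : Type*} [Ring K] [Nontrivial K]
    [Semiring R] [Fintype m] [DecidableEq m] [Nonempty m] {ι : K →+* R} {τ : R}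
    {coeff : R → ℕ → K}
    (hcoeff : ∀ (N : ℕ) (a : ℕ → K),
      coeff (∑ k ∈ range (N + 1), ι (a k) * τ ^ k) = fun k => if k ≤ N then a k else 0)
    {M : Matrix m m R} {N r : ℕ} {A : ℕ → Matrix m m K}
    (hhigh : ∀ k, N < k → ∀ i j, coeff (M i j) k = 0)
    (hne : (Matrix.of fun i j => coeff (M i j) N) ≠ 0)
    (hnil : IsNilpotent (Matrix.of fun i j => coeff (M i j) N))
    (hM : M = ∑ k ∈ range (r + 1), (A k).map ι * (Matrix.diagonal fun _ => τ) ^ k) :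
    ¬ IsUnit (A r) := by
  have hA := coeff_apply_eq_of_eq_sum hcoeff hM
  rcases lt_trichotomy r N with hr | rfl | hr
  · refine absurd ?_ hne
    ext i j
    simp [hA, hr.not_ge]
  · have hAr : A r = Matrix.of fun i j => coeff (M i j) r := by
      ext i j
      simp [hA]
    exact hAr ▸ hnil.not_isUnit
  · have hAr : A r = 0 := by
      ext i j
      simpa [hA] using hhigh r hr i j
    exact hAr ▸ not_isUnit_zero

theorem Dd_not_almost_strictly_pure_general (q : ℕ) (Fq K R : Type*)
    [Field Fq] [Fintype Fq] (hcard : Fintype.card Fq = q)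
    [Field K] [Algebra Fq K] [Ring R]
    (θ : K) (hθ : Transcendental Fq θ)
    (ι : K →+* R) (τ : R)
    (twist : ∀ a : K, τ * ι a = ι (a ^ q) * τ)
    (coeff : R → ℕ → K)
    (hcoeff : ∀ (N : ℕ) (a : ℕ → K),
      coeff (∑ k ∈ Finset.range (N + 1), ι (a k) * τ ^ k)
        = fun k => if k ≤ N then a k else 0)
    (d : ℕ) (hd : 2 ≤ d)
    (Dd : Matrix (Fin d) (Fin d) R)
    (hDd : ∀ i j : Fin d, Dd i j =
      if (i : ℕ) = 0 ∧ (j : ℕ) = 0 then 1 + τ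
      else if (i : ℕ) = 1 ∧ (j : ℕ) = 1 then 1 + τ
      else if (i : ℕ) = 1 ∧ (j : ℕ) = 0 then ι θ * τ ^ 2
      else if i = j then ι θ + τ
      else 0) :
    (∀ n : ℕ, 1 ≤ n → ∃ x : K, x ≠ 0 ∧
      (∀ i j : Fin d, coeff ((Dd ^ n) i j) (n + 1)
        = if (i : ℕ) = 1 ∧ (j : ℕ) = 0 then x else 0) ∧
      (∀ k, n + 1 < k → ∀ i j, coeff ((Dd ^ n) i j) k = 0) ∧
      (Matrix.of fun i j => coeff ((Dd ^ n) i j) (n + 1)) ≠ 0 ∧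
      IsNilpotent (Matrix.of fun i j => coeff ((Dd ^ n) i j) (n + 1))) ∧
    ¬ ∃ s : ℕ, 1 ≤ s ∧ ∃ (r : ℕ) (A : ℕ → Matrix (Fin d) (Fin d) K), IsUnit (A r) ∧
      Dd ^ s = ∑ k ∈ Finset.range (r + 1),
        (A k).map ι * (Matrix.diagonal fun _ => τ) ^ k := by
  obtain ⟨k, rfl⟩ : ∃ k, d = k + 2 := ⟨d - 2, by omega⟩
  have hDd_eq : Dd = lowerBlockDiag k (ι 1 + τ) (ι θ * τ ^ 2) (ι θ + τ) := by
    ext i j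
    rw [hDd, map_one]
    rfl
  have hentry (n : ℕ) (i j : Fin (k + 2)) : IsTauPolyLE ι τ ((Dd ^ n) i j) (n + 1)
      (if (i : ℕ) = 1 ∧ (j : ℕ) = 0 then ∑ m ∈ range n, θ ^ q ^ m else 0) := by
    rw [hDd_eq, lowerBlockDiag_pow]
    exact isTauPolyLE_lowerBlockDiag_apply (isTauPolyLE_map_add_pow twist 1 n).succ
      (isTauPolyLE_cornerPow twist 1 θ n) (isTauPolyLE_map_add_pow twist θ n).succ i j
  have hx (n : ℕ) (hn : 1 ≤ n) : ∑ m ∈ range n, θ ^ q ^ m ≠ 0 :=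
    sum_pow_pow_ne_zero_of_transcendental hθ (hcard ▸ Fintype.one_lt_card) (by omega)
  have hlead (n : ℕ) : (Matrix.of fun i j => coeff ((Dd ^ n) i j) (n + 1))
      = Matrix.single 1 0 (∑ m ∈ range n, θ ^ q ^ m) := by
    ext i j
    rw [Matrix.of_apply, (hentry n i j).coeff_eq hcoeff, Matrix.single_apply]
    simp only [Fin.ext_iff, Fin.val_one, Fin.val_zero, eq_comm]
  have hhigh (n : ℕ) : ∀ k, n + 1 < k → ∀ i j, coeff ((Dd ^ n) i j) k = 0 :=
    fun _ hk i j => (hentry n i j).coeff_eq_zero_of_lt hcoeff hk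
  have hne (n : ℕ) (hn : 1 ≤ n) : (Matrix.of fun i j => coeff ((Dd ^ n) i j) (n + 1)) ≠ 0 :=
    hlead n ▸ fun h => hx n hn (by simpa using congrFun (congrFun h 1) 0)
  have hnil (n : ℕ) : IsNilpotent (Matrix.of fun i j => coeff ((Dd ^ n) i j) (n + 1)) :=
    hlead n ▸ Matrix.isNilpotent_single_of_ne (by simp) _
  exact ⟨fun n hn => ⟨_, hx n hn, fun i j => (hentry n i j).coeff_eq hcoeff, hhigh n, hne n hn,
    hnil n⟩, fun ⟨s, hs, r, A, hA, hAs⟩ =>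
      not_isUnit_of_eq_sum_of_isNilpotent_coeff hcoeff (hhigh s) (hne s hs) (hnil s) hAs hA⟩

/-- For every integer `d ≥ 2`, the block-diagonal matrix
`D_d = diag(D₂, θ+τ, ..., θ+τ) ∈ M_d(K{τ})` (with `d−2` copies of the Carlitz matrix
`θ+τ`, where `D₂ = I₂ + I₂τ + [[0,0],[θ,0]]τ²`) has the property that for every
`n ≥ 1` the leading `τ`-coefficient of `D_d ^ n` equals the block matrix
`diag(A_{n+1,n}, 0_{d−2})` where `A_{n+1,n} = [[0,0],[x_{n+1,n},0]]` with
`x_{n+1,n} ≠ 0`; in particular this leading coefficient is a nonzero nilpotent matrix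
and `D_d` defines a `t`-module that is not almost strictly pure. -/
theorem Dd_not_almost_strictly_pure (q : ℕ) (Fq K R : Type*)
    [Field Fq] [Fintype Fq] (hcard : Fintype.card Fq = q)
    [Field K] [Algebra Fq K] [Ring R]
    (θ : K) (hθ : Transcendental Fq θ)
    (ι : K →+* R) (τ : R)
    (twist : ∀ a : K, τ * ι a = ι (a ^ q) * τ)
    (coeff : R → ℕ → K)
    (hrepr : ∀ x : R, ∃ N : ℕ,
      x = ∑ k ∈ Finset.range (N + 1), ι (coeff x k) * τ ^ k ∧ ∀ k > N, coeff x k = 0)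
    (hcoeff : ∀ (N : ℕ) (a : ℕ → K),
      coeff (∑ k ∈ Finset.range (N + 1), ι (a k) * τ ^ k)
        = fun k => if k ≤ N then a k else 0)
    (d : ℕ) (hd : 2 ≤ d)
    (Dd : Matrix (Fin d) (Fin d) R)
    (hDd : ∀ i j : Fin d, Dd i j =
      if (i : ℕ) = 0 ∧ (j : ℕ) = 0 then 1 + τ
      else if (i : ℕ) = 1 ∧ (j : ℕ) = 1 then 1 + τ
      else if (i : ℕ) = 1 ∧ (j : ℕ) = 0 then ι θ * τ ^ 2
      else if i = j then ι θ + τ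
      else 0) :
    (∀ n : ℕ, 1 ≤ n → ∃ x : K, x ≠ 0 ∧
      (∀ i j : Fin d, coeff ((Dd ^ n) i j) (n + 1)
        = if (i : ℕ) = 1 ∧ (j : ℕ) = 0 then x else 0) ∧
      (∀ k, n + 1 < k → ∀ i j, coeff ((Dd ^ n) i j) k = 0) ∧
      (Matrix.of fun i j => coeff ((Dd ^ n) i j) (n + 1)) ≠ 0 ∧
      IsNilpotent (Matrix.of fun i j => coeff ((Dd ^ n) i j) (n + 1))) ∧
    ¬ ∃ s : ℕ, 1 ≤ s ∧ ∃ (r : ℕ) (A : ℕ → Matrix (Fin d) (Fin d) K), IsUnit (A r) ∧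
      Dd ^ s = ∑ k ∈ Finset.range (r + 1),
        (A k).map ι * (Matrix.diagonal fun _ => τ) ^ k :=
  Dd_not_almost_strictly_pure_general q Fq K R hcard θ hθ ι τ twist coeff hcoeff d hd Dd hDd
end
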